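/- arXiv:1504.08238 — 2 statements merged into one kernel-verified Lean document; each statement's English description precedes it below -/
import Mathlib

section
/- Let X and Y be Banach spaces over 𝕂 (= ℝ or ℂ), let E be an invariant sequence space over X, let Γ ⊆ (0, ∞] and let f : X → Y be strongly non-contractive. Then the set C^w(E, f, Γ) = { (x_j)_{j=1}^∞ ∈ E : (f(x_j))_{j=1}^∞ ∉ ⋃_{q∈Γ} ℓ_q^w(Y) } is either empty or spaceable in E. -/
open scoped Classical

/-- The zero-deleted sequence `x⁰`: if `x` has infinitely many nonzero coordinates, the
sequence of its nonzero coordinates in order; otherwise `0`. -/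
noncomputable def zeroFree {X : Type*} [Zero X] (x : ℕ → X) : ℕ → X :=
  if {j | x j ≠ 0}.Infinite then fun k => x (Nat.nth (fun j => x j ≠ 0) k) else 0

/-- An invariant sequence space over a Banach space `X` (Definition 1.1 of the paper):
an infinite-dimensional Banach space of `X`-valued sequences such that
(b1) for `x` with `x⁰ ≠ 0`, `x ∈ E ↔ x⁰ ∈ E` and `‖x‖ ≤ K‖x⁰‖`, and
(b2) `‖x j‖ ≤ ‖x‖` for every `x ∈ E` and every `j`.  Completeness and closedness are
expressed via the metric induced by the norm function. -/
structure InvariantSeqSpace (𝕂 : Type*) (X : Type*) [RCLike 𝕂]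
    [NormedAddCommGroup X] [NormedSpace 𝕂 X] where
  carrier : Submodule 𝕂 (ℕ → X)
  norm : (ℕ → X) → ℝ
  norm_nonneg : ∀ x ∈ carrier, 0 ≤ norm x
  norm_eq_zero_iff : ∀ x ∈ carrier, (norm x = 0 ↔ x = 0)
  norm_smul : ∀ (a : 𝕂), ∀ x ∈ carrier, norm (a • x) = ‖a‖ * norm x
  norm_add_le : ∀ x ∈ carrier, ∀ y ∈ carrier, norm (x + y) ≤ norm x + norm y
  complete : ∀ u : ℕ → ℕ → X, (∀ n, u n ∈ carrier) →
    (∀ ε : ℝ, 0 < ε → ∃ N, ∀ m ≥ N, ∀ n ≥ N, norm (u m - u n) < ε) →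
    ∃ x ∈ carrier, ∀ ε : ℝ, 0 < ε → ∃ N, ∀ n ≥ N, norm (u n - x) < ε
  infiniteDimensional : ¬ Module.Finite 𝕂 carrier
  K : ℝ
  K_pos : 0 < K
  mem_iff_zeroFree_mem : ∀ x : ℕ → X, zeroFree x ≠ 0 → (x ∈ carrier ↔ zeroFree x ∈ carrier)
  norm_le_K_mul : ∀ x : ℕ → X, zeroFree x ≠ 0 → x ∈ carrier → norm x ≤ K * norm (zeroFree x)
  coord_norm_le : ∀ x ∈ carrier, ∀ j : ℕ, ‖x j‖ ≤ norm x

/-- A strongly invariant sequence space: an invariant sequence space containing `c₀₀(X)`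
and such that a sequence belongs to the space iff all of its subsequences do. -/
structure StronglyInvariantSeqSpace (𝕂 : Type*) (X : Type*) [RCLike 𝕂]
    [NormedAddCommGroup X] [NormedSpace 𝕂 X] extends InvariantSeqSpace 𝕂 X where
  c00_subset : ∀ x : ℕ → X, {j | x j ≠ 0}.Finite → x ∈ carrier
  mem_iff_subseq : ∀ x : ℕ → X,
    x ∈ carrier ↔ ∀ n : ℕ → ℕ, StrictMono n → (fun k => x (n k)) ∈ carrier

/-- A subset `A` of an invariant sequence space `E` is spaceable if `A ∪ {0}` contains a
closed (w.r.t. the norm of `E`) infinite-dimensional linear subspace of `E`. -/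
def Spaceable {𝕂 X : Type*} [RCLike 𝕂] [NormedAddCommGroup X] [NormedSpace 𝕂 X]
    (E : InvariantSeqSpace 𝕂 X) (A : Set (ℕ → X)) : Prop :=
  ∃ V : Submodule 𝕂 (ℕ → X), V ≤ E.carrier ∧ ¬ Module.Finite 𝕂 V ∧
    (V : Set (ℕ → X)) ⊆ A ∪ {0} ∧
    ∀ u : ℕ → ℕ → X, (∀ n, u n ∈ V) → ∀ z ∈ E.carrier,
      (∀ ε : ℝ, 0 < ε → ∃ N, ∀ n ≥ N, E.norm (u n - z) < ε) → z ∈ V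

/-- `f : X → Y` is strongly non-contractive: `f 0 = 0` and for every scalar `α ≠ 0` there
is `K(α) > 0` with `|φ(f(αx))| ≥ K(α)|φ(f(x))|` for all `x ∈ X` and all `φ ∈ Y'`. -/
def StronglyNonContractive {𝕂 X Y : Type*} [RCLike 𝕂]
    [NormedAddCommGroup X] [NormedSpace 𝕂 X] [NormedAddCommGroup Y] [NormedSpace 𝕂 Y]
    (f : X → Y) : Prop :=
  f 0 = 0 ∧ ∀ a : 𝕂, a ≠ 0 → ∃ K : ℝ, 0 < K ∧
    ∀ (x : X) (φ : Y →L[𝕂] 𝕂), K * ‖φ (f x)‖ ≤ ‖φ (f (a • x))‖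

/-- Membership in `ℓ_q^w(Y)` for `0 < q ≤ ∞`: for `q < ∞`, `Σ |φ(y_j)|^q < ∞` for every
`φ ∈ Y'`; for `q = ∞`, `ℓ_∞^w(Y) = ℓ_∞(Y)` is the space of bounded sequences. -/
def MemLqWeak {𝕂 Y : Type*} [RCLike 𝕂] [NormedAddCommGroup Y] [NormedSpace 𝕂 Y]
    (q : ENNReal) (y : ℕ → Y) : Prop :=
  if q = ⊤ then ∃ C : ℝ, ∀ j, ‖y j‖ ≤ C
  else ∀ φ : Y →L[𝕂] 𝕂, Summable fun j => ‖φ (y j)‖ ^ q.toReal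

/-!
Take `x` in the set. Since `f 0 = 0`, a finitely supported `x` would give a sequence in every
`ℓ_q^w`, so `x` has infinite support and `w = x⁰` is a sequence of `E` without zero coordinates
with `(f (w k))` still in no `ℓ_q^w`, `q ∈ Γ`. Split `ℕ` into the infinitely many infinite blocks
`{Nat.pair i k | k}` and consider the sequences of `E` whose restriction to each block is a
multiple of `w`. This is closed (coordinate convergence follows from (b2)), and contains the
linearly independent copies of `w` spread on a single block, which lie in `E` by (b1). A nonzero
element restricts on some block to `a • w` with `a ≠ 0`, and by strong non-contractivity
`(f (a • w k))`, a subsequence of its image under `f`, lies in no `ℓ_q^w` either.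
-/

open Function

namespace MemLqWeak

variable {𝕂 Y : Type*} [RCLike 𝕂] [NormedAddCommGroup Y] [NormedSpace 𝕂 Y] {q : ENNReal}

theorem comp_injective {y : ℕ → Y} (hy : MemLqWeak (𝕂 := 𝕂) q y) {g : ℕ → ℕ}
    (hg : Injective g) : MemLqWeak (𝕂 := 𝕂) q (y ∘ g) := by
  unfold MemLqWeak at hy ⊢
  split_ifs at hy ⊢
  · obtain ⟨C, hC⟩ := hy
    exact ⟨C, fun k => hC (g k)⟩
  · exact fun φ => (hy φ).comp_injective hg

theorem of_comp_injective (hq : q ≠ 0) {y : ℕ → Y} {g : ℕ → ℕ} (hg : Injective g)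
    (hy_zero : ∀ j ∉ Set.range g, y j = 0) (hy : MemLqWeak (𝕂 := 𝕂) q (y ∘ g)) :
    MemLqWeak (𝕂 := 𝕂) q y := by
  unfold MemLqWeak at hy ⊢
  split_ifs at hy ⊢ with hq_top
  · obtain ⟨C, hC⟩ := hy
    refine ⟨max C 0, fun j => ?_⟩
    by_cases hj : j ∈ Set.range g
    · obtain ⟨k, rfl⟩ := hj
      exact (hC k).trans (le_max_left _ _)
    · simp [hy_zero j hj]
  · have hp : q.toReal ≠ 0 := (ENNReal.toReal_pos hq hq_top).ne'
    intro φ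
    refine (hg.summable_iff fun j hj => ?_).1 (hy φ)
    simp [hy_zero j hj, hp]

theorem of_finite_support (hq : q ≠ 0) {y : ℕ → Y} (hy : {j | y j ≠ 0}.Finite) :
    MemLqWeak (𝕂 := 𝕂) q y := by
  unfold MemLqWeak
  split_ifs with hq_top
  · refine ⟨∑ j ∈ hy.toFinset, ‖y j‖, fun j => ?_⟩
    by_cases hj : y j = 0
    · simpa [hj] using Finset.sum_nonneg fun i _ => norm_nonneg (y i)
    · exact Finset.single_le_sum (f := fun j => ‖y j‖) (fun i _ => norm_nonneg _)
        (hy.mem_toFinset.2 hj)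
  · have hp : q.toReal ≠ 0 := (ENNReal.toReal_pos hq hq_top).ne'
    intro φ
    refine summable_of_hasFiniteSupport (hy.subset fun j hj => ?_)
    contrapose! hj
    simp [show y j = 0 by simpa using hj, hp]

theorem of_norm_dual_le {y y' : ℕ → Y} {C : ℝ} (hC : 0 ≤ C)
    (h : ∀ (φ : Y →L[𝕂] 𝕂) j, ‖φ (y j)‖ ≤ C * ‖φ (y' j)‖) (hy' : MemLqWeak (𝕂 := 𝕂) q y') :
    MemLqWeak (𝕂 := 𝕂) q y := by
  unfold MemLqWeak at hy' ⊢
  split_ifs at hy' ⊢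
  · obtain ⟨B, hB⟩ := hy'
    have hB0 : 0 ≤ B := (norm_nonneg _).trans (hB 0)
    refine ⟨C * B, fun j => NormedSpace.norm_le_dual_bound 𝕂 _ (by positivity) fun φ => ?_⟩
    calc ‖φ (y j)‖ ≤ C * ‖φ (y' j)‖ := h φ j
      _ ≤ C * (‖φ‖ * ‖y' j‖) := by gcongr; exact φ.le_opNorm _
      _ ≤ C * (‖φ‖ * B) := by gcongr; exact hB j
      _ = C * B * ‖φ‖ := by ring
  · intro φ
    refine .of_nonneg_of_le (fun j => by positivity) (fun j => ?_)
      ((hy' φ).mul_left (C ^ q.toReal))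
    rw [← Real.mul_rpow hC (norm_nonneg _)]
    exact Real.rpow_le_rpow (norm_nonneg _) (h φ j) ENNReal.toReal_nonneg

end MemLqWeak

theorem zeroFree_apply_ne_zero {X : Type*} [Zero X] {x : ℕ → X} (hx : {j | x j ≠ 0}.Infinite)
    (k : ℕ) : zeroFree x k ≠ 0 := by
  simpa [zeroFree, hx] using Nat.nth_mem_of_infinite hx k

theorem Nat.nth_eq_of_strictMono {p : ℕ → Prop} {g : ℕ → ℕ} (hg : StrictMono g)
    (h : {j | p j} = Set.range g) : Nat.nth p = g := by
  have hinf : {j | p j}.Infinite := h ▸ Set.infinite_range_of_injective hg.injective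
  exact ((Nat.nth_strictMono hinf).range_inj hg).1 (h ▸ Nat.range_nth_of_infinite hinf)

theorem zeroFree_extend {X : Type*} [Zero X] {g : ℕ → ℕ} (hg : StrictMono g) {w : ℕ → X}
    (hw : ∀ k, w k ≠ 0) : zeroFree (extend g w 0) = w := by
  have hsupp : {j | extend g w 0 j ≠ 0} = Set.range g := by
    ext j
    by_cases hj : ∃ k, g k = j
    · obtain ⟨k, rfl⟩ := hj
      simp [hg.injective.extend_apply, hw]
    · simp [hj]
  have hinf : {j | extend g w 0 j ≠ 0}.Infinite :=
    hsupp ▸ Set.infinite_range_of_injective hg.injective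
  funext k
  simp [zeroFree, hinf, Nat.nth_eq_of_strictMono hg hsupp, hg.injective.extend_apply]

theorem Nat.pair_strictMono_right (i : ℕ) : StrictMono (Nat.pair i) :=
  fun _ _ => Nat.pair_lt_pair_right i

section BlockSpace

variable (𝕂 : Type*) {X : Type*} [RCLike 𝕂] [NormedAddCommGroup X] [NormedSpace 𝕂 X]

def blockSpace (w : ℕ → X) : Submodule 𝕂 (ℕ → X) :=
  ⨅ i, (𝕂 ∙ w).comap (LinearMap.funLeft 𝕂 X (Nat.pair i))

variable {𝕂}

theorem mem_blockSpace {w z : ℕ → X} :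
    z ∈ blockSpace 𝕂 w ↔ ∀ i, ∃ a : 𝕂, a • w = z ∘ Nat.pair i := by
  simp only [blockSpace, Submodule.mem_iInf, Submodule.mem_comap, Submodule.mem_span_singleton]
  rfl

theorem isClosed_blockSpace (w : ℕ → X) : IsClosed (blockSpace 𝕂 w : Set (ℕ → X)) := by
  simp only [blockSpace, Submodule.coe_iInf, Submodule.comap_coe]
  exact isClosed_iInter fun i => (Submodule.closed_of_finiteDimensional _).preimage
    (continuous_pi fun k => continuous_apply (Nat.pair i k))

theorem extend_mem_blockSpace (w : ℕ → X) (i : ℕ) :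
    extend (Nat.pair i) w 0 ∈ blockSpace 𝕂 w := by
  refine mem_blockSpace.2 fun i' => ?_
  by_cases hi : i' = i
  · subst hi
    exact ⟨1, funext fun k => by simp [(Nat.pair_strictMono_right i').injective.extend_apply]⟩
  refine ⟨0, funext fun k => ?_⟩
  have : ¬ ∃ k', Nat.pair i k' = Nat.pair i' k := by simp [Nat.pair_eq_pair, Ne.symm hi]
  simp [extend_apply' _ _ _ this]

end BlockSpace

theorem linearIndependent_of_apply_diag_ne_zero {ι κ R M : Type*} [Ring R] [IsDomain R]
    [AddCommGroup M] [Module R M] [Module.IsTorsionFree R M] {v : ι → κ → M} (p : ι → κ)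
    (hdiag : ∀ i, v i (p i) ≠ 0) (hoff : ∀ i j, i ≠ j → v j (p i) = 0) :
    LinearIndependent R v := by
  refine linearIndependent_iff'.2 fun s c hsum i hi => ?_
  have hsum_at := congrFun hsum (p i)
  rw [Finset.sum_apply, Finset.sum_eq_single_of_mem i hi fun j _ hji => by
    simp [hoff i j (Ne.symm hji)]] at hsum_at
  exact (smul_eq_zero.1 hsum_at).resolve_right (hdiag i)

section

variable {𝕂 X Y : Type*} [RCLike 𝕂] [NormedAddCommGroup X] [NormedSpace 𝕂 X]
  [NormedAddCommGroup Y] [NormedSpace 𝕂 Y] {f : X → Y} {q : ENNReal}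

theorem StronglyNonContractive.memLqWeak_of_smul (hf : StronglyNonContractive (𝕂 := 𝕂) f)
    {a : 𝕂} (ha : a ≠ 0) {w : ℕ → X}
    (h : MemLqWeak (𝕂 := 𝕂) q fun k => f (a • w k)) : MemLqWeak (𝕂 := 𝕂) q fun k => f (w k) := by
  obtain ⟨K, hK, hfK⟩ := hf.2 a ha
  refine MemLqWeak.of_norm_dual_le (inv_nonneg.2 hK.le) (fun φ k => ?_) h
  rw [le_inv_mul_iff₀ hK]
  exact hfK (w k) φ

theorem StronglyNonContractive.infinite_support_of_not_memLqWeak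
    (hf : StronglyNonContractive (𝕂 := 𝕂) f) (hq : q ≠ 0) {x : ℕ → X}
    (hx : ¬ MemLqWeak (𝕂 := 𝕂) q fun j => f (x j)) : {j | x j ≠ 0}.Infinite := by
  refine fun hfin => hx (MemLqWeak.of_finite_support hq (hfin.subset fun j hj => ?_))
  contrapose! hj
  simp [show x j = 0 by simpa using hj, hf.1]

theorem StronglyNonContractive.memLqWeak_of_zeroFree (hf : StronglyNonContractive (𝕂 := 𝕂) f)
    (hq : q ≠ 0) {x : ℕ → X} (hx : {j | x j ≠ 0}.Infinite)
    (h : MemLqWeak (𝕂 := 𝕂) q fun k => f (zeroFree x k)) :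
    MemLqWeak (𝕂 := 𝕂) q fun j => f (x j) := by
  refine MemLqWeak.of_comp_injective hq (Nat.nth_injective hx) (fun j hj => ?_) ?_
  · rw [Nat.range_nth_of_infinite hx] at hj
    simp [show x j = 0 by simpa using hj, hf.1]
  · simpa [zeroFree, hx, comp_def] using h

theorem StronglyNonContractive.memLqWeak_of_mem_blockSpace
    (hf : StronglyNonContractive (𝕂 := 𝕂) f) {w z : ℕ → X}
    (hz : z ∈ blockSpace 𝕂 w) (hz0 : z ≠ 0) (h : MemLqWeak (𝕂 := 𝕂) q fun j => f (z j)) :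
    MemLqWeak (𝕂 := 𝕂) q fun k => f (w k) := by
  obtain ⟨j, hj⟩ := ne_iff.1 hz0
  obtain ⟨a, ha⟩ := mem_blockSpace.1 hz (Nat.unpair j).1
  have ha0 : a ≠ 0 := by
    rintro rfl
    refine hj ?_
    simpa [Nat.pair_unpair] using (congrFun ha (Nat.unpair j).2).symm
  refine hf.memLqWeak_of_smul ha0 ?_
  convert h.comp_injective (Nat.pair_strictMono_right (Nat.unpair j).1).injective using 2 with k
  exact congrArg f (congrFun ha k)

end

section

variable {𝕂 X : Type*} [RCLike 𝕂] [NormedAddCommGroup X] [NormedSpace 𝕂 X]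

theorem InvariantSeqSpace.not_finite_inf_blockSpace (E : InvariantSeqSpace 𝕂 X) {w : ℕ → X}
    (hwE : w ∈ E.carrier) (hw : ∀ k, w k ≠ 0) :
    ¬ Module.Finite 𝕂 ↥(E.carrier ⊓ blockSpace 𝕂 w) := by
  intro hfin
  set v : ℕ → ℕ → X := fun i => extend (Nat.pair i) w 0
  have hzeroFree (i : ℕ) : zeroFree (v i) = w := zeroFree_extend (Nat.pair_strictMono_right i) hw
  have hv_mem (i : ℕ) : v i ∈ E.carrier ⊓ blockSpace 𝕂 w := by
    refine ⟨?_, extend_mem_blockSpace w i⟩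
    have hw0 : zeroFree (v i) ≠ 0 := hzeroFree i ▸ fun h => hw 0 (congrFun h 0)
    exact (E.mem_iff_zeroFree_mem _ hw0).2 (hzeroFree i ▸ hwE)
  have hv : LinearIndependent 𝕂 v := by
    refine linearIndependent_of_apply_diag_ne_zero (fun i => Nat.pair i 0) (fun i => ?_)
      fun i j hij => ?_
    · simpa [v, (Nat.pair_strictMono_right i).injective.extend_apply] using hw 0
    · have : ¬ ∃ k, Nat.pair j k = Nat.pair i 0 := by simp [Nat.pair_eq_pair, Ne.symm hij]
      simp [v, extend_apply' _ _ _ this]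
  exact Module.Finite.not_linearIndependent_of_infinite _
    (LinearIndependent.of_comp (E.carrier ⊓ blockSpace 𝕂 w).subtype
      (v := fun i => (⟨v i, hv_mem i⟩ : ↥(E.carrier ⊓ blockSpace 𝕂 w))) hv)

theorem InvariantSeqSpace.spaceable_of_isClosed (E : InvariantSeqSpace 𝕂 X)
    {A : Set (ℕ → X)} (V : Submodule 𝕂 (ℕ → X)) (hV : IsClosed (V : Set (ℕ → X)))
    (hinf : ¬ Module.Finite 𝕂 ↥(E.carrier ⊓ V)) (hA : ↑(E.carrier ⊓ V) ⊆ A ∪ {0}) :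
    Spaceable E A := by
  refine ⟨E.carrier ⊓ V, inf_le_left, hinf, hA, fun u hu z hzE hlim => ⟨hzE, ?_⟩⟩
  have hcoord : Filter.Tendsto u Filter.atTop (nhds z) := by
    refine tendsto_pi_nhds.2 fun j => NormedAddCommGroup.tendsto_atTop.2 fun ε hε => ?_
    obtain ⟨N, hN⟩ := hlim ε hε
    exact ⟨N, fun n hn => (E.coord_norm_le _ (E.carrier.sub_mem (hu n).1 hzE) j).trans_lt
      (hN n hn)⟩
  exact hV.mem_of_tendsto hcoord (Filter.Eventually.of_forall fun n => (hu n).2)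

end

theorem spaceability_of_Cw_general {𝕂 X Y : Type*} [RCLike 𝕂]
    [NormedAddCommGroup X] [NormedSpace 𝕂 X]
    [NormedAddCommGroup Y] [NormedSpace 𝕂 Y]
    (E : InvariantSeqSpace 𝕂 X) (Γ : Set ENNReal) (hΓ : ∀ q ∈ Γ, 0 < q)
    (f : X → Y) (hf : StronglyNonContractive (𝕂 := 𝕂) f) :
    {x : ℕ → X | x ∈ E.carrier ∧
        ∀ q ∈ Γ, ¬ MemLqWeak (𝕂 := 𝕂) q fun j => f (x j)} = ∅ ∨
      Spaceable E {x : ℕ → X | x ∈ E.carrier ∧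
        ∀ q ∈ Γ, ¬ MemLqWeak (𝕂 := 𝕂) q fun j => f (x j)} := by
  rcases Γ.eq_empty_or_nonempty with rfl | ⟨q₀, hq₀⟩
  · refine Or.inr (E.spaceable_of_isClosed ⊤ isClosed_univ ?_ fun z hz => Or.inl ⟨hz.1, by simp⟩)
    rw [inf_top_eq]
    exact E.infiniteDimensional
  rcases Set.eq_empty_or_nonempty {x : ℕ → X | x ∈ E.carrier ∧
      ∀ q ∈ Γ, ¬ MemLqWeak (𝕂 := 𝕂) q fun j => f (x j)} with hA | ⟨x, hxE, hx⟩
  · exact Or.inl hA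
  have hsupp := hf.infinite_support_of_not_memLqWeak (hΓ q₀ hq₀).ne' (hx q₀ hq₀)
  set w := zeroFree x
  have hw0 : ∀ k, w k ≠ 0 := zeroFree_apply_ne_zero hsupp
  have hwE : w ∈ E.carrier :=
    (E.mem_iff_zeroFree_mem x fun h => hw0 0 (congrFun h 0)).1 hxE
  have hw (q) (hq : q ∈ Γ) : ¬ MemLqWeak (𝕂 := 𝕂) q fun k => f (w k) :=
    fun h => hx q hq (hf.memLqWeak_of_zeroFree (hΓ q hq).ne' hsupp h)
  refine Or.inr (E.spaceable_of_isClosed _ (isClosed_blockSpace w)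
    (E.not_finite_inf_blockSpace hwE hw0) fun z ⟨hzE, hzV⟩ => ?_)
  by_cases hz0 : z = 0
  · exact Or.inr hz0
  exact Or.inl ⟨hzE, fun q hq h => hw q hq (hf.memLqWeak_of_mem_blockSpace hzV hz0 h)⟩

/-- **Theorem 1.4(b) (Botelho–Fávaro).**  If `f` is strongly non-contractive and
`Γ ⊆ (0, ∞]`, then `C^w(E, f, Γ) = {(x_j) ∈ E : (f(x_j)) ∉ ⋃_{q ∈ Γ} ℓ_q^w(Y)}` is
either empty or spaceable in `E`. -/
theorem spaceability_of_Cw {𝕂 X Y : Type*} [RCLike 𝕂]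
    [NormedAddCommGroup X] [NormedSpace 𝕂 X] [CompleteSpace X]
    [NormedAddCommGroup Y] [NormedSpace 𝕂 Y] [CompleteSpace Y]
    (E : InvariantSeqSpace 𝕂 X) (Γ : Set ENNReal) (hΓ : ∀ q ∈ Γ, 0 < q)
    (f : X → Y) (hf : StronglyNonContractive (𝕂 := 𝕂) f) :
    {x : ℕ → X | x ∈ E.carrier ∧
        ∀ q ∈ Γ, ¬ MemLqWeak (𝕂 := 𝕂) q fun j => f (x j)} = ∅ ∨
      Spaceable E {x : ℕ → X | x ∈ E.carrier ∧
        ∀ q ∈ Γ, ¬ MemLqWeak (𝕂 := 𝕂) q fun j => f (x j)} :=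
  spaceability_of_Cw_general E Γ hΓ f hf
end

section
/- Let X and Y be Banach spaces over 𝕂 (= ℝ or ℂ), let Γ be a nonempty set, let E be an invariant sequence space over X, for each l ∈ Γ let F_l be a strongly invariant sequence space over 𝕂, and let f : X → Y satisfy f(0) = 0. If x = (x_j)_{j=1}^∞ ∈ E satisfies (f(x_j))_{j=1}^∞ ∉ ⋃_{l∈Γ} F_l^w(Y), then x has infinitely many nonzero coordinates (so x⁰ ≠ 0), x⁰ ∈ E, and writing x⁰ = (x_{j_k})_{k=1}^∞ one has (f(x_{j_k}))_{k=1}^∞ ∉ ⋃_{l∈Γ} F_l^w(Y); that is, x⁰ ∈ G^w(E, f, (F_l)_{l∈Γ}). -/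
open scoped Classical

/-- For an invariant sequence space `F` over the scalar field `𝕂` and a Banach space `Y`,
`F^w(Y) = {(x_j) ∈ Y^ℕ : (φ(x_j))_j ∈ F for every φ ∈ Y'}`. -/
def weakSpace {𝕂 : Type*} [RCLike 𝕂] (F : InvariantSeqSpace 𝕂 𝕂)
    (Y : Type*) [NormedAddCommGroup Y] [NormedSpace 𝕂 Y] : Set (ℕ → Y) :=
  {x | ∀ φ : Y →L[𝕂] 𝕂, (fun j => φ (x j)) ∈ F.carrier}

/-
The finitely supported case is excluded because `f 0 = 0` puts `(φ (f (x j)))_j` in `c₀₀ ⊆ F_l`.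
Otherwise `x⁰ = x ∘ nth (x · ≠ 0)`, and any sequence `g` supported in `{j | p j}` is recovered
from `g ∘ nth p`: its zero-deleted sequence is a subsequence of `g ∘ nth p`, reindexed by
`count p`, so strong invariance transfers membership from `g ∘ nth p` back to `g`.
-/

lemma zeroFree_of_infinite {X : Type*} [Zero X] {x : ℕ → X} (h : {j | x j ≠ 0}.Infinite) :
    zeroFree x = fun k => x (Nat.nth (fun j => x j ≠ 0) k) :=
  if_pos h

lemma zeroFree_ne_zero {X : Type*} [Zero X] {x : ℕ → X} (h : {j | x j ≠ 0}.Infinite) :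
    zeroFree x ≠ 0 := by
  rw [zeroFree_of_infinite h]
  exact fun h0 => Nat.nth_mem_of_infinite h 0 (congrFun h0 0)

section Reindex

variable {X : Type*} [Zero X] {p : ℕ → Prop} [DecidablePred p] {g : ℕ → X}

lemma zeroFree_eq_comp_nth_count (hsupp : ∀ j, g j ≠ 0 → p j) (h : {j | g j ≠ 0}.Infinite) :
    zeroFree g = fun k => g (Nat.nth p (Nat.count p (Nat.nth (fun j => g j ≠ 0) k))) := by
  rw [zeroFree_of_infinite h]
  funext k
  rw [Nat.nth_count (hsupp _ (Nat.nth_mem_of_infinite h k))]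

lemma strictMono_count_nth (hsupp : ∀ j, g j ≠ 0 → p j) (h : {j | g j ≠ 0}.Infinite) :
    StrictMono fun k => Nat.count p (Nat.nth (fun j => g j ≠ 0) k) := fun _ _ hab =>
  Nat.count_strict_mono (hsupp _ (Nat.nth_mem_of_infinite h _)) (Nat.nth_strictMono h hab)

end Reindex

theorem StronglyInvariantSeqSpace.mem_of_comp_nth_mem {𝕂 X : Type*} [RCLike 𝕂]
    [NormedAddCommGroup X] [NormedSpace 𝕂 X] (F : StronglyInvariantSeqSpace 𝕂 X)
    {p : ℕ → Prop} {g : ℕ → X} (hsupp : ∀ j, g j ≠ 0 → p j)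
    (hg : (fun k => g (Nat.nth p k)) ∈ F.carrier) : g ∈ F.carrier := by
  by_cases hfin : {j | g j ≠ 0}.Finite
  · exact F.c00_subset g hfin
  refine (F.mem_iff_zeroFree_mem g (zeroFree_ne_zero hfin)).mpr ?_
  rw [zeroFree_eq_comp_nth_count hsupp hfin]
  exact (F.mem_iff_subseq _).mp hg _ (strictMono_count_nth hsupp hfin)

section WeakSpace

variable {𝕂 Y : Type*} [RCLike 𝕂] [NormedAddCommGroup Y] [NormedSpace 𝕂 Y]
  (F : StronglyInvariantSeqSpace 𝕂 𝕂)

lemma mem_weakSpace_of_finite {y : ℕ → Y} (hy : {j | y j ≠ 0}.Finite) :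
    y ∈ weakSpace F.toInvariantSeqSpace Y := fun φ =>
  F.c00_subset _ (hy.subset fun _ hj h => hj (by rw [h, map_zero]))

lemma mem_weakSpace_of_comp_nth_mem {p : ℕ → Prop} {y : ℕ → Y} (hsupp : ∀ j, y j ≠ 0 → p j)
    (hy : (fun k => y (Nat.nth p k)) ∈ weakSpace F.toInvariantSeqSpace Y) :
    y ∈ weakSpace F.toInvariantSeqSpace Y := fun φ =>
  F.mem_of_comp_nth_mem (fun j hj => hsupp j fun h => hj (by rw [h, map_zero])) (hy φ)

end WeakSpace

theorem zeroFree_mem_Gw_general {𝕂 X Y : Type*} [RCLike 𝕂]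
    [NormedAddCommGroup X] [NormedSpace 𝕂 X]
    [NormedAddCommGroup Y] [NormedSpace 𝕂 Y]
    {Γ : Type*} [Nonempty Γ]
    (E : InvariantSeqSpace 𝕂 X) (Fl : Γ → StronglyInvariantSeqSpace 𝕂 𝕂)
    (f : X → Y) (hf0 : f 0 = 0) (x : ℕ → X) (hxE : x ∈ E.carrier)
    (hx : ∀ l : Γ, (fun j => f (x j)) ∉ weakSpace (Fl l).toInvariantSeqSpace Y) :
    {j | x j ≠ 0}.Infinite ∧ zeroFree x ≠ 0 ∧ zeroFree x ∈ E.carrier ∧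
      ∀ l : Γ, (fun k => f (zeroFree x k)) ∉ weakSpace (Fl l).toInvariantSeqSpace Y := by
  have hsupp : ∀ j, f (x j) ≠ 0 → x j ≠ 0 := fun j h hxj => h (by rw [hxj, hf0])
  have hinf : {j | x j ≠ 0}.Infinite := fun hfin =>
    hx (Classical.arbitrary Γ) (mem_weakSpace_of_finite _ (hfin.subset hsupp))
  have hne := zeroFree_ne_zero hinf
  refine ⟨hinf, hne, (E.mem_iff_zeroFree_mem x hne).mp hxE, fun l hl => hx l ?_⟩
  rw [zeroFree_of_infinite hinf] at hl
  exact mem_weakSpace_of_comp_nth_mem _ hsupp hl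

/-- **Step 1 of the proof of Theorem 3.8.**  If `f 0 = 0` and
`x ∈ G^w(E, f, (F_l)_{l ∈ Γ})`, then `x` has infinitely many nonzero coordinates (so
`x⁰ ≠ 0`), `x⁰ ∈ E`, and `(f(x⁰_k))_k ∉ ⋃_l F_l^w(Y)`; that is,
`x⁰ ∈ G^w(E, f, (F_l))`. -/
theorem zeroFree_mem_Gw {𝕂 X Y : Type*} [RCLike 𝕂]
    [NormedAddCommGroup X] [NormedSpace 𝕂 X] [CompleteSpace X]
    [NormedAddCommGroup Y] [NormedSpace 𝕂 Y] [CompleteSpace Y]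
    {Γ : Type*} [Nonempty Γ]
    (E : InvariantSeqSpace 𝕂 X) (Fl : Γ → StronglyInvariantSeqSpace 𝕂 𝕂)
    (f : X → Y) (hf0 : f 0 = 0) (x : ℕ → X) (hxE : x ∈ E.carrier)
    (hx : ∀ l : Γ, (fun j => f (x j)) ∉ weakSpace (Fl l).toInvariantSeqSpace Y) :
    {j | x j ≠ 0}.Infinite ∧ zeroFree x ≠ 0 ∧ zeroFree x ∈ E.carrier ∧
      ∀ l : Γ, (fun k => f (zeroFree x k)) ∉ weakSpace (Fl l).toInvariantSeqSpace Y :=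
  zeroFree_mem_Gw_general E Fl f hf0 x hxE hx
end
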